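/- arXiv:0806.0309 — 5 statements merged into one kernel-verified Lean document; each statement's English description precedes it below -/
import Mathlib

section
/- Every finite abelian group is isomorphic to its own dual in the following sense: if G is a finite abelian group and H ≤ G is a subgroup, then there exists a subgroup K ≤ G with K ≅ G/H and G/K ≅ H. -/
/-!
Identify `G` with its character group `Ĝ = G →* ℂˣ` (a noncanonical isomorphism, which exists for
every finite abelian group). Characters of `H` extend to `G`, so restriction `Ĝ → Ĥ` is
surjective, and its kernel, the characters trivial on `H`, is the character group of `G ⧸ H`.
The image `K` of this kernel in `G` therefore satisfies `K ≅ (G ⧸ H)^ ≅ G ⧸ H` and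
`G ⧸ K ≅ Ĝ ⧸ ker ≅ Ĥ ≅ H`.
-/

open MonoidHom

theorem CommGroup.exists_subgroup_mulEquiv_quotient_and_quotient_mulEquiv
    (G : Type*) [CommGroup G] [Finite G] (H : Subgroup G) :
    ∃ K : Subgroup G, Nonempty (K ≃* G ⧸ H) ∧ Nonempty (G ⧸ K ≃* H) := by
  obtain ⟨eG⟩ := monoidHom_mulEquiv_of_hasEnoughRootsOfUnity G ℂ
  obtain ⟨eH⟩ := monoidHom_mulEquiv_of_hasEnoughRootsOfUnity H ℂ
  obtain ⟨eQ⟩ := monoidHom_mulEquiv_of_hasEnoughRootsOfUnity (G ⧸ H) ℂ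
  let restrict := domRestrictHom H ℂˣ
  have ker_equiv : restrict.ker ≃* (G ⧸ H →* ℂˣ) := domRestrictHomKerEquiv ℂˣ H
  have quotient_ker_equiv : (G →* ℂˣ) ⧸ restrict.ker ≃* (H →* ℂˣ) :=
    QuotientGroup.quotientKerEquivOfSurjective restrict (domRestrict_surjective ℂ H)
  refine ⟨restrict.ker.map eG, ⟨?_⟩, ⟨?_⟩⟩
  · exact (eG.subgroupMap restrict.ker).symm.trans (ker_equiv.trans eQ)
  · exact (QuotientGroup.congr restrict.ker _ eG rfl).symm.trans (quotient_ker_equiv.trans eH)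

theorem stmt2 (G : Type*) [AddCommGroup G] [Fintype G] (H : AddSubgroup G) :
    ∃ K : AddSubgroup G,
      Nonempty (K ≃+ G ⧸ H) ∧ Nonempty ((G ⧸ K) ≃+ H) := by
  obtain ⟨K, ⟨e₁⟩, ⟨e₂⟩⟩ :=
    CommGroup.exists_subgroup_mulEquiv_quotient_and_quotient_mulEquiv (Multiplicative G)
      H.toSubgroup
  exact ⟨K.toAddSubgroup', ⟨e₁.toAdditive⟩, ⟨e₂.toAdditive⟩⟩
end

section
/- Let G be a finite abelian group with invariant factors m_1 | ... | m_r and let H ≤ G be a subgroup with invariant factors m'_1 | ... | m'_r (padded by 1's). If m'_t = m_t for some index t, then there exists a subgroup K ≤ H with K ≅ C_{m_t} such that K is a direct summand of both H and G. -/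
/-- `l` is the list of invariant factors of the finite abelian group `G`
(possibly padded with leading `1`'s). -/
def IsInvFactorDecomp (G : Type*) [AddCommGroup G] (l : List ℕ) : Prop :=
  (∀ n ∈ l, 1 ≤ n) ∧ l.Chain' (· ∣ ·) ∧
    Nonempty (G ≃+ ((i : Fin l.length) → ZMod (l.get i)))

/-!
Put `m = m_t`. It suffices to find `y ∈ H` with `m • y = 0` and a homomorphism `f : G → ℤ/m`
with `f y = 1`: if `g : ℤ/m → G` sends `1` to `y`, then `f ∘ g = id`, so `K = ⟨y⟩ ≅ ℤ/m` and the
kernels of `f` and of its restriction to `H` are complements of `K` in `G` and in `H`. By the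
Chinese remainder theorem such pairs for the prime powers `p ^ a ∥ m` add up to one for `m`.

Fix `p ^ a ∥ m` with `a ≥ 1` and count elements of order dividing `p`. Those that are
`p ^ (a - 1)`-fold multiples in `H` number at least `p ^ #{i | i ≥ t}`, since
`p ^ a ∣ m = m'_t ∣ m'_i` for `i ≥ t`. Those that are `p ^ a`-fold multiples in `G` number at
most `p ^ #{i | i > t}`, since `p ^ (a + 1) ∤ m_i` for `i ≤ t`. Hence some `p ^ (a - 1) • h` with
`h ∈ H` is not a `p ^ a`-fold multiple in `G`; in a coordinate `i` witnessing this, `h_i` is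
prime to `p` and `p ^ a ∣ m_i`, so reducing mod `p ^ a` and dividing by `h_i` gives
`f : G → ℤ/p^a` with `f h = 1`.
-/

open Finset

section

variable {G A : Type*} [AddCommGroup G] [AddCommGroup A]

theorem List.IsChain.dvd_get_of_le {l : List ℕ} (h : l.IsChain (· ∣ ·)) {i j : Fin l.length}
    (hij : i ≤ j) : l.get i ∣ l.get j := by
  rcases hij.eq_or_lt with rfl | hlt
  · rfl
  · exact List.pairwise_iff_getElem.mp (List.isChain_iff_pairwise.mp h) i j i.isLt j.isLt hlt

theorem eq_zero_of_nsmul_eq_zero_of_coprime {c d : ℕ} (hcd : c.Coprime d) {x : A}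
    (hc : c • x = 0) (hd : d • x = 0) : x = 0 :=
  AddMonoid.addOrderOf_eq_one_iff.mp <| Nat.eq_one_of_dvd_coprimes hcd
    (addOrderOf_dvd_of_nsmul_eq_zero hc) (addOrderOf_dvd_of_nsmul_eq_zero hd)

variable (A) in
def torsionMultiples (c d : ℕ) : Set A := {x | c • x = 0 ∧ ∃ u, d • u = x}

theorem Nat.card_torsionMultiples_congr {B : Type*} [AddCommGroup B] (e : A ≃+ B) (c d : ℕ) :
    Nat.card (torsionMultiples A c d) = Nat.card (torsionMultiples B c d) :=
  Nat.card_congr <| e.toEquiv.subtypeEquiv fun x => by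
    simp [torsionMultiples, e.surjective.exists, ← map_nsmul]

theorem torsionMultiples_pi {ι : Type*} (M : ι → Type*) [∀ i, AddCommGroup (M i)] (c d : ℕ) :
    torsionMultiples (∀ i, M i) c d = Set.univ.pi fun i => torsionMultiples (M i) c d := by
  ext x
  simp only [torsionMultiples, Set.mem_ofPred_eq, Set.mem_univ_pi, funext_iff, Pi.smul_apply,
    Pi.zero_apply, forall_and, Classical.skolem]

theorem Nat.card_torsionMultiples_pi {ι : Type*} [Fintype ι] (M : ι → Type*)
    [∀ i, AddCommGroup (M i)] (c d : ℕ) :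
    Nat.card (torsionMultiples (∀ i, M i) c d) = ∏ i, Nat.card (torsionMultiples (M i) c d) := by
  rw [torsionMultiples_pi, Nat.card_congr (Equiv.Set.univPi _), Nat.card_pi]

theorem eq_zero_of_mem_torsionMultiples {n p a : ℕ} (hp : p.Prime) (hn : n ≠ 0)
    (hpn : ¬ p ^ (a + 1) ∣ n) (hA : ∀ x : A, n • x = 0) {x : A}
    (hx : x ∈ torsionMultiples A p (p ^ a)) : x = 0 := by
  obtain ⟨hpx, u, rfl⟩ := hx
  have hle : n.factorization p ≤ a := by
    by_contra! h
    exact hpn ((hp.pow_dvd_iff_le_factorization hn).mpr h)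
  obtain ⟨k, hk⟩ := Nat.exists_eq_add_of_le hle
  -- the `p`-free part of `n` kills `p ^ a • u`, since `p ^ a` absorbs the `p`-part of `n`
  have hkill : n / p ^ n.factorization p * p ^ a = p ^ k * n := by
    conv_rhs => rw [← Nat.ordProj_mul_ordCompl_eq_self n p]
    rw [hk, pow_add]
    ring
  refine eq_zero_of_nsmul_eq_zero_of_coprime (Nat.coprime_ordCompl hp hn) hpx ?_
  rw [smul_smul, hkill, mul_smul, hA, smul_zero]

theorem ZMod.card_torsionMultiples_le {n p : ℕ} [NeZero n] (hp : 0 < p) (d : ℕ) :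
    Nat.card (torsionMultiples (ZMod n) p d) ≤ p := by
  classical
  calc Nat.card (torsionMultiples (ZMod n) p d)
      ≤ Nat.card {x : ZMod n | p • x = 0} := Nat.card_mono (Set.toFinite _) fun _ hx => hx.1
    _ = #{x : ZMod n | p • x = 0} := by rw [Nat.card_eq_card_toFinset, Set.toFinset_ofPred]
    _ ≤ p := IsAddCyclic.card_nsmul_eq_zero_le hp

theorem ZMod.le_card_torsionMultiples {n p a : ℕ} [NeZero n] (hp : p.Prime) (ha : 0 < a)
    (hpn : p ^ a ∣ n) : p ≤ Nat.card (torsionMultiples (ZMod n) p (p ^ (a - 1))) := by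
  obtain ⟨c, rfl⟩ := hpn
  have hpa : p ^ a = p * p ^ (a - 1) := by rw [← pow_succ', Nat.sub_add_cancel ha]
  set x₀ : ZMod (p ^ a * c) := ((p ^ (a - 1) * c : ℕ) : ZMod (p ^ a * c))
  have hpx₀ : p • x₀ = 0 := by
    rw [nsmul_eq_mul, ← Nat.cast_mul, ← mul_assoc, ← hpa, ZMod.natCast_self]
  have hx₀ : x₀ ≠ 0 := by
    rw [Ne, ZMod.natCast_eq_zero_iff]
    have hc : c ≠ 0 := right_ne_zero_of_mul (NeZero.ne (p ^ a * c))
    have hpos : 0 < p ^ (a - 1) * c := Nat.mul_pos (pow_pos hp.pos _) (Nat.pos_of_ne_zero hc)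
    refine fun h => (Nat.le_of_dvd hpos h).not_gt ?_
    rw [hpa, mul_assoc]
    exact lt_mul_left hpos hp.one_lt
  have : Fact p.Prime := ⟨hp⟩
  calc p = Nat.card (AddSubgroup.zmultiples x₀) := by
        rw [Nat.card_zmultiples, addOrderOf_eq_prime hpx₀ hx₀]
    _ ≤ Nat.card (torsionMultiples (ZMod (p ^ a * c)) p (p ^ (a - 1))) := by
        refine Nat.card_mono (Set.toFinite _) ?_
        rintro _ ⟨k, rfl⟩
        refine ⟨by rw [smul_comm, hpx₀, smul_zero], k • (c : ZMod (p ^ a * c)), ?_⟩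
        simp only [x₀]
        rw [smul_comm, nsmul_eq_mul, ← Nat.cast_mul]

section PiZMod

variable {ι : Type*} {n : ι → ℕ} [∀ i, NeZero (n i)] {p a : ℕ}

theorem card_torsionMultiples_pi_zmod_le [Fintype ι] (hp : p.Prime) :
    Nat.card (torsionMultiples (∀ i, ZMod (n i)) p (p ^ a)) ≤ p ^ #{i | p ^ (a + 1) ∣ n i} := by
  rw [Nat.card_torsionMultiples_pi]
  calc ∏ i, Nat.card (torsionMultiples (ZMod (n i)) p (p ^ a))
      ≤ ∏ i, if p ^ (a + 1) ∣ n i then p else 1 := by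
        refine Finset.prod_le_prod (fun _ _ => Nat.zero_le _) fun i _ => ?_
        split_ifs with h
        · exact ZMod.card_torsionMultiples_le hp.pos _
        · refine (Nat.card_mono (Set.finite_singleton 0) fun x hx => ?_).trans_eq Nat.card_unique
          exact eq_zero_of_mem_torsionMultiples hp (NeZero.ne _) h
            (ZModModule.char_nsmul_eq_zero _) hx
    _ = p ^ #{i | p ^ (a + 1) ∣ n i} := by
        rw [Finset.prod_ite, prod_const, prod_const_one, mul_one]

theorem le_card_torsionMultiples_pi_zmod [Fintype ι] (hp : p.Prime) (ha : 0 < a) :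
    p ^ #{i | p ^ a ∣ n i} ≤ Nat.card (torsionMultiples (∀ i, ZMod (n i)) p (p ^ (a - 1))) := by
  rw [Nat.card_torsionMultiples_pi]
  calc p ^ #{i | p ^ a ∣ n i} = ∏ i, if p ^ a ∣ n i then p else 1 := by
        rw [Finset.prod_ite, prod_const, prod_const_one, mul_one]
    _ ≤ ∏ i, Nat.card (torsionMultiples (ZMod (n i)) p (p ^ (a - 1))) := by
        refine Finset.prod_le_prod (fun _ _ => Nat.zero_le _) fun i _ => ?_
        split_ifs with h
        · exact ZMod.le_card_torsionMultiples hp ha h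
        · have : Nonempty (torsionMultiples (ZMod (n i)) p (p ^ (a - 1))) :=
            ⟨0, smul_zero _, 0, smul_zero _⟩
          exact Nat.card_pos

theorem ZMod.exists_addMonoidHom_apply_eq_one {n : ℕ} [NeZero n] (hp : p.Prime) (ha : 0 < a)
    {w : ZMod n} (hw : p ^ a • w = 0) (hw' : p ^ (a - 1) • w ∉ Set.range (p ^ a • ·)) :
    ∃ f : ZMod n →+ ZMod (p ^ a), f w = 1 := by
  have hpa : p * p ^ (a - 1) = p ^ a := by rw [← pow_succ', Nat.sub_add_cancel ha]
  have hdvd : p ^ a ∣ n := by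
    by_contra h
    refine hw' ⟨0, Eq.symm ?_⟩
    change _ = p ^ a • 0
    rw [smul_zero]
    refine eq_zero_of_mem_torsionMultiples hp (NeZero.ne n) (by rwa [Nat.sub_add_cancel ha])
      (ZModModule.char_nsmul_eq_zero n) ⟨?_, w, rfl⟩
    rwa [smul_smul, hpa]
  have hcop : w.val.Coprime (p ^ a) := by
    refine Nat.Coprime.pow_right a ((hp.coprime_iff_not_dvd.mpr ?_).symm)
    rintro ⟨k, hk⟩
    refine hw' ⟨k, ?_⟩
    rw [← ZMod.natCast_zmod_val w, hk, Nat.cast_mul, ← nsmul_eq_mul, smul_smul, mul_comm, hpa]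
  let u := ZMod.unitOfCoprime w.val hcop
  refine ⟨(AddMonoidHom.mulLeft (u⁻¹ : (ZMod (p ^ a))ˣ).val).comp
    (ZMod.castHom hdvd (ZMod (p ^ a))).toAddMonoidHom, ?_⟩
  change (u⁻¹ : (ZMod (p ^ a))ˣ).val * ZMod.castHom hdvd _ w = 1
  rw [ZMod.castHom_apply, ZMod.cast_eq_val, ← ZMod.coe_unitOfCoprime w.val hcop, Units.inv_mul]

theorem exists_addMonoidHom_pi_zmod_apply_eq_one (hp : p.Prime) (ha : 0 < a)
    {w : ∀ i, ZMod (n i)} (hw : p ^ a • w = 0) (hw' : p ^ (a - 1) • w ∉ Set.range (p ^ a • ·)) :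
    ∃ f : (∀ i, ZMod (n i)) →+ ZMod (p ^ a), f w = 1 := by
  obtain ⟨i, hi⟩ : ∃ i, p ^ (a - 1) • w i ∉ Set.range (p ^ a • ·) := by
    by_contra! h
    choose u hu using h
    exact hw' ⟨u, funext hu⟩
  obtain ⟨f, hf⟩ := ZMod.exists_addMonoidHom_apply_eq_one hp ha (congrFun hw i) hi
  exact ⟨f.comp (Pi.evalAddMonoidHom _ i), hf⟩

end PiZMod

theorem AddMonoidHom.isCompl_range_ker_of_leftInverse {f : G →+ A} {g : A →+ G}
    (h : Function.LeftInverse f g) : IsCompl g.range f.ker := by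
  constructor
  · rw [disjoint_iff_inf_le]
    rintro _ ⟨⟨a, rfl⟩, hfa⟩
    change f (g a) = 0 at hfa
    rw [h a] at hfa
    rw [hfa, map_zero]
    exact zero_mem _
  · rw [codisjoint_iff_le_sup]
    intro x _
    rw [← add_sub_cancel (g (f x)) x]
    refine AddSubgroup.add_mem_sup ⟨f x, rfl⟩ ?_
    rw [AddMonoidHom.mem_ker, map_sub, h, sub_self]

namespace AddSubgroup

/-- `y` spans a copy of `ℤ/m` inside `H` that `f` splits off `G`. -/
def HasSplitCyclic (H : AddSubgroup G) (m : ℕ) : Prop :=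
  ∃ y ∈ H, m • y = 0 ∧ ∃ f : G →+ ZMod m, f y = 1

variable {H : AddSubgroup G}

theorem hasSplitCyclic_one : H.HasSplitCyclic 1 :=
  ⟨0, H.zero_mem, smul_zero _, 0, Subsingleton.elim _ _⟩

theorem HasSplitCyclic.mul {m n : ℕ} (hmn : m.Coprime n) (hm : H.HasSplitCyclic m)
    (hn : H.HasSplitCyclic n) : H.HasSplitCyclic (m * n) := by
  obtain ⟨y, hyH, hmy, f, hfy⟩ := hm
  obtain ⟨z, hzH, hnz, g, hgz⟩ := hn
  have hfz : f z = 0 := eq_zero_of_nsmul_eq_zero_of_coprime hmn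
    (ZModModule.char_nsmul_eq_zero m _) (by rw [← map_nsmul, hnz, map_zero])
  have hgy : g y = 0 := eq_zero_of_nsmul_eq_zero_of_coprime hmn.symm
    (ZModModule.char_nsmul_eq_zero n _) (by rw [← map_nsmul, hmy, map_zero])
  refine ⟨y + z, H.add_mem hyH hzH, ?_,
    (ZMod.chineseRemainder hmn).symm.toAddMonoidHom.comp (f.prod g), ?_⟩
  · rw [smul_add, mul_comm, mul_smul, hmy, mul_comm, mul_smul, hnz, smul_zero, smul_zero, add_zero]
  · simp [hfy, hgz, hfz, hgy]

theorem hasSplitCyclic_of_forall_primeFactors {m : ℕ} (hm : m ≠ 0)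
    (h : ∀ p ∈ m.primeFactors, H.HasSplitCyclic (p ^ m.factorization p)) :
    H.HasSplitCyclic m := by
  suffices ∀ s ⊆ m.primeFactors, H.HasSplitCyclic (∏ p ∈ s, p ^ m.factorization p) by
    simpa [← Nat.prod_primeFactors_pow_factorization hm] using this _ subset_rfl
  intro s hs
  induction s using Finset.induction_on with
  | empty => exact hasSplitCyclic_one
  | insert p s hps ih =>
    rw [prod_insert hps]
    have hp := Nat.prime_of_mem_primeFactors (hs (mem_insert_self p s))
    refine (h p (hs (mem_insert_self p s))).mul (Nat.Coprime.prod_right fun q hq => ?_)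
      (ih ((subset_insert p s).trans hs))
    exact Nat.coprime_pow_primes _ _ hp (Nat.prime_of_mem_primeFactors (hs (mem_insert_of_mem hq)))
      (ne_of_mem_of_not_mem hq hps).symm

theorem HasSplitCyclic.exists_isCompl {m : ℕ} (h : H.HasSplitCyclic m) :
    ∃ K : AddSubgroup G, K ≤ H ∧ Nonempty (K ≃+ ZMod m) ∧
      (∃ L : AddSubgroup H, IsCompl (K.addSubgroupOf H) L) ∧
      (∃ L : AddSubgroup G, IsCompl K L) := by
  obtain ⟨y, hyH, hmy, f, hfy⟩ := h
  let g : ZMod m →+ G := ZMod.lift m ⟨zmultiplesHom G y, by simpa using hmy⟩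
  have hg : ∀ k : ℤ, g k = k • y := fun k => ZMod.lift_coe m _ k
  have hgH : ∀ z, g z ∈ H := fun z => by
    obtain ⟨k, rfl⟩ := ZMod.intCast_surjective z
    rw [hg]
    exact H.zsmul_mem hyH k
  have hfg : Function.LeftInverse f g := fun z => by
    obtain ⟨k, rfl⟩ := ZMod.intCast_surjective z
    rw [hg, map_zsmul, hfy, zsmul_one]
  have hrange : (g.codRestrict H hgH).range = g.range.addSubgroupOf H := by
    ext x
    simp [AddSubgroup.mem_addSubgroupOf, Subtype.ext_iff]
  refine ⟨g.range, ?_, ⟨(AddMonoidHom.ofLeftInverse hfg).symm⟩, ⟨(f.comp H.subtype).ker, ?_⟩,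
    ⟨_, AddMonoidHom.isCompl_range_ker_of_leftInverse hfg⟩⟩
  · rintro _ ⟨z, rfl⟩
    exact hgH z
  · rw [← hrange]
    exact AddMonoidHom.isCompl_range_ker_of_leftInverse (f := f.comp H.subtype) hfg

end AddSubgroup

section InvariantFactors

variable {H : AddSubgroup G} {lG lH : List ℕ} (hlen : lH.length = lG.length)
  (hG : IsInvFactorDecomp G lG) (hH : IsInvFactorDecomp H lH) {t : Fin lG.length}
  (ht : lH.get (Fin.cast hlen.symm t) = lG.get t) {p : ℕ} (hp : p.Prime)

include hG in
theorem IsInvFactorDecomp.neZero (i : Fin lG.length) : NeZero (lG.get i) :=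
  ⟨Nat.one_le_iff_ne_zero.mp (hG.1 _ (List.get_mem _ _))⟩

include hG hH ht hp in
theorem card_torsionMultiples_lt (hpt : p ∣ lG.get t) :
    Nat.card (torsionMultiples G p (p ^ (lG.get t).factorization p)) <
      Nat.card (torsionMultiples H p (p ^ ((lG.get t).factorization p - 1))) := by
  have := hG.neZero
  have := hH.neZero
  obtain ⟨-, hGc, ⟨π⟩⟩ := hG
  obtain ⟨-, hHc, ⟨ρ⟩⟩ := hH
  set a := (lG.get t).factorization p
  have hm : lG.get t ≠ 0 := NeZero.ne _
  have ha : 0 < a := hp.factorization_pos_of_dvd hm hpt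
  calc Nat.card (torsionMultiples G p (p ^ a))
      ≤ p ^ #{i | p ^ (a + 1) ∣ lG.get i} := by
        rw [Nat.card_torsionMultiples_congr π]
        exact card_torsionMultiples_pi_zmod_le hp
    _ ≤ p ^ #(Ioi t) := by
        refine Nat.pow_le_pow_right hp.pos (card_le_card fun i hi => ?_)
        rw [mem_filter] at hi
        rw [mem_Ioi]
        by_contra! hit
        exact Nat.pow_succ_factorization_not_dvd hm hp (hi.2.trans (hGc.dvd_get_of_le hit))
    _ < p ^ #(Ici (Fin.cast hlen.symm t)) := by
        refine Nat.pow_lt_pow_right hp.one_lt ?_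
        rw [Fin.card_Ioi, Fin.card_Ici, Fin.val_cast, hlen]
        have := t.isLt
        omega
    _ ≤ p ^ #{i | p ^ a ∣ lH.get i} := by
        refine Nat.pow_le_pow_right hp.pos (card_le_card fun i hi => ?_)
        rw [mem_Ici] at hi
        rw [mem_filter]
        exact ⟨mem_univ _, (Nat.ordProj_dvd _ p).trans (ht ▸ hHc.dvd_get_of_le hi)⟩
    _ ≤ Nat.card (torsionMultiples H p (p ^ (a - 1))) := by
        rw [Nat.card_torsionMultiples_congr ρ]
        exact le_card_torsionMultiples_pi_zmod hp ha

include hG hH ht hp in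
theorem hasSplitCyclic_primePow (hpt : p ∣ lG.get t) :
    H.HasSplitCyclic (p ^ (lG.get t).factorization p) := by
  have := hG.neZero
  set a := (lG.get t).factorization p
  have ha : 0 < a := hp.factorization_pos_of_dvd (NeZero.ne _) hpt
  obtain ⟨π⟩ := hG.2.2
  have : Finite G := Finite.of_equiv _ π.symm.toEquiv
  obtain ⟨_, ⟨s, ⟨hps, h, rfl⟩, rfl⟩, hsG⟩ :
      ∃ x ∈ H.subtype '' torsionMultiples H p (p ^ (a - 1)), x ∉ torsionMultiples G p (p ^ a) := by
    refine Set.exists_mem_notMem_of_ncard_lt_ncard ?_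
    rw [Set.ncard_image_of_injective _ H.subtype_injective, ← Nat.card_coe_set_eq,
      ← Nat.card_coe_set_eq]
    exact card_torsionMultiples_lt hlen hG hH ht hp hpt
  have hps' : p • p ^ (a - 1) • (h : G) = 0 := by simpa using congrArg H.subtype hps
  have hh : p ^ a • (h : G) = 0 := by
    rwa [smul_smul, ← pow_succ', Nat.sub_add_cancel ha] at hps'
  have hndiv : p ^ (a - 1) • (h : G) ∉ Set.range (p ^ a • ·) := fun hdiv =>
    hsG ⟨by simpa using hps', by simpa using hdiv⟩
  obtain ⟨f, hf⟩ := exists_addMonoidHom_pi_zmod_apply_eq_one hp ha (w := π h)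
    (by rw [← map_nsmul, hh, map_zero]) fun ⟨u, hu⟩ =>
      hndiv ⟨π.symm u, π.injective (by simpa [map_nsmul] using hu)⟩
  exact ⟨h, h.2, hh, f.comp π.toAddMonoidHom, hf⟩

end InvariantFactors

end

theorem stmt4_general (G : Type*) [AddCommGroup G] (H : AddSubgroup G)
    (lG lH : List ℕ) (hlen : lH.length = lG.length)
    (hG : IsInvFactorDecomp G lG)
    (hH : IsInvFactorDecomp H lH)
    (t : Fin lG.length) (ht : lH.get (Fin.cast hlen.symm t) = lG.get t) :
    ∃ K : AddSubgroup G, K ≤ H ∧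
      Nonempty (K ≃+ ZMod (lG.get t)) ∧
      (∃ L : AddSubgroup H, IsCompl (K.addSubgroupOf H) L) ∧
      (∃ L : AddSubgroup G, IsCompl K L) := by
  have := hG.neZero t
  refine AddSubgroup.HasSplitCyclic.exists_isCompl <|
    AddSubgroup.hasSplitCyclic_of_forall_primeFactors (NeZero.ne _) fun p hp => ?_
  exact hasSplitCyclic_primePow hlen hG hH ht (Nat.prime_of_mem_primeFactors hp)
    (Nat.dvd_of_mem_primeFactors hp)

theorem stmt4 (G : Type*) [AddCommGroup G] [Fintype G] (H : AddSubgroup G)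
    (lG lH : List ℕ) (hlen : lH.length = lG.length)
    (hG : IsInvFactorDecomp G lG) (hG1 : ∀ n ∈ lG, 1 < n)
    (hH : IsInvFactorDecomp H lH)
    (t : Fin lG.length) (ht : lH.get (Fin.cast hlen.symm t) = lG.get t) :
    ∃ K : AddSubgroup G, K ≤ H ∧
      Nonempty (K ≃+ ZMod (lG.get t)) ∧
      (∃ L : AddSubgroup H, IsCompl (K.addSubgroupOf H) L) ∧
      (∃ L : AddSubgroup G, IsCompl K L) :=
  stmt4_general G H lG lH hlen hG hH t ht
end

section
/- Let p be a prime with p ≡ -1 (mod 4), let G = Z/pZ, n = (p-1)/2, and let W be the integer sequence consisting of (n-1)/2 copies of 1, (n-1)/2 copies of -1, and one 0. Let S be the sequence over G consisting of n copies each of 0, 1, and 2. Then the set of weighted n-term subsequence sums Σ_{|W|}(W,S) equals G \ {(p+1)/2, (p-1)/2}; in particular, it contains no nontrivial subgroup of G. -/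
/-- The set of weighted `n`-term subsequence sums `Σ_n(W,S)`: all sums
`Σ wᵢ • s_{τ(i)}` over `n`-term subsequences of `W` and of `S`, arbitrarily paired. -/
def wsums (G : Type*) [AddCommGroup G] (n : ℕ) (W : Multiset ℤ) (S : Multiset G) :
    Set G :=
  { g | ∃ (w : List ℤ) (s : List G), w.length = n ∧ s.length = n ∧
      (w : Multiset ℤ) ≤ W ∧ (s : Multiset G) ≤ S ∧
      g = ((w.zip s).map fun p => p.1 • p.2).sum }

/-!
Write `p = 2n + 1` and `n = 2m + 1`. Since `|W| = n`, the weights used are all of `W`, so a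
weighted sum is the sum of `m` terms of `S` minus the sum of `m` other terms (the term weighted
by `0` drops out). Lifting the terms `0, 1, 2` to integers, such a sum is the image of an integer
`t` with `|t| ≤ 2m = n - 1`, and every such `t` occurs. Modulo `2n + 1` these integers hit every
residue except `±n`, i.e. except `(p - 1) / 2` and `(p + 1) / 2`. As `p` is prime, a nonzero
subgroup is all of `ZMod p` and would contain `n`.
-/

open Multiset

theorem Multiset.le_of_card_le_of_forall_le_count {α : Type*} [DecidableEq α] {s t : Multiset α}
    {n : ℕ} (hcard : card s ≤ n) (hcount : ∀ a ∈ s, n ≤ count a t) : s ≤ t := by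
  rw [le_iff_count]
  intro a
  by_cases ha : a ∈ s
  · exact (count_le_card a s).trans (hcard.trans (hcount a ha))
  · simp [count_eq_zero.mpr ha]

theorem le_count_replicate_zero_one_two {R : Type*} [AddMonoidWithOne R] [DecidableEq R]
    (k : ℕ) {a : R} (ha : a = 0 ∨ a = 1 ∨ a = 2) :
    k ≤ count a (replicate k 0 + replicate k 1 + replicate k 2) := by
  rw [le_count_iff_replicate_le]
  rcases ha with rfl | rfl | rfl
  · exact (Multiset.le_add_right _ _).trans (Multiset.le_add_right _ _)
  · exact (Multiset.le_add_left _ _).trans (Multiset.le_add_right _ _)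
  · exact Multiset.le_add_left _ _

theorem sum_zip_replicate_zsmul {G : Type*} [AddCommGroup G] (c : ℤ) {k : ℕ} (l : List G)
    (hl : l.length = k) :
    (((List.replicate k c).zip l).map fun q => q.1 • q.2).sum = c • l.sum := by
  subst hl
  induction l with
  | nil => simp
  | cons x t ih => simp [List.replicate_succ, smul_add, ih]

theorem exists_list_sum_eq_of_le_two_mul {R : Type*} [AddMonoidWithOne R] (m A : ℕ)
    (h : A ≤ 2 * m) :
    ∃ l : List R, l.length = m ∧ (∀ x ∈ l, x = 0 ∨ x = 1 ∨ x = 2) ∧ l.sum = A := by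
  induction m generalizing A with
  | zero => exact ⟨[], rfl, by simp, by simp [show A = 0 by omega]⟩
  | succ m ih =>
    obtain ⟨l, hlen, hmem, hsum⟩ := ih (A - min A 2) (by omega)
    refine ⟨((min A 2 : ℕ) : R) :: l, by simp [hlen], ?_, ?_⟩
    · simp only [List.mem_cons, forall_eq_or_imp]
      refine ⟨?_, hmem⟩
      rcases show min A 2 = 0 ∨ min A 2 = 1 ∨ min A 2 = 2 by omega with h | h | h <;> simp [h]
    · rw [List.sum_cons, hsum, ← Nat.cast_add]
      congr 1
      omega

theorem sum_zip_mul_mem_Icc {β : Type*} (f : β → ℤ) {B : ℤ} (hB : 0 ≤ B) (w : List ℤ)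
    (s : List β) (hs : ∀ x ∈ s, f x ∈ Set.Icc 0 B) :
    ((w.zip s).map fun q => q.1 * f q.2).sum ∈
      Set.Icc (-(B * (w.map fun a => max (-a) 0).sum)) (B * (w.map fun a => max a 0).sum) := by
  induction w generalizing s with
  | nil => simp
  | cons a w ih =>
    have hpos := List.sum_nonneg (l := w.map fun a => max a 0) (by simp)
    have hneg := List.sum_nonneg (l := w.map fun a => max (-a) 0) (by simp)
    cases s with
    | nil =>
      simp only [List.zip_nil_right, List.map_nil, List.sum_nil, List.map_cons, List.sum_cons]
      constructor <;> nlinarith [le_max_right a 0, le_max_right (-a) 0]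
    | cons x s =>
      obtain ⟨ih_lo, ih_hi⟩ := ih s fun y hy => hs y (List.mem_cons_of_mem x hy)
      obtain ⟨hx0, hxB⟩ := hs x List.mem_cons_self
      simp only [List.zip_cons_cons, List.map_cons, List.sum_cons]
      constructor <;> rcases le_total a 0 with ha | ha <;> simp [ha] <;> nlinarith

theorem ZMod.sum_zip_zsmul_eq_intCast {N : ℕ} [NeZero N] (w : List ℤ) (s : List (ZMod N)) :
    ((w.zip s).map fun q => q.1 • q.2).sum =
      (((w.zip s).map fun q => q.1 * (q.2.val : ℤ)).sum : ZMod N) := by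
  rw [Int.cast_list_sum, List.map_map]
  congr 1
  refine List.map_congr_left fun q _ => ?_
  simp [zsmul_eq_mul]

theorem ZMod.val_le_two_of_mem_replicate_zero_one_two {N k : ℕ} {x : ZMod N}
    (hx : x ∈ replicate k 0 + replicate k 1 + replicate k 2) : x.val ≤ 2 := by
  simp only [mem_add, mem_replicate] at hx
  rcases hx with (⟨-, rfl⟩ | ⟨-, rfl⟩) | ⟨-, rfl⟩
  · simp
  · exact (ZMod.val_one_eq_one_mod _).trans_le ((Nat.mod_le _ _).trans one_le_two)
  · exact (ZMod.val_two_eq_two_mod _).trans_le (Nat.mod_le _ _)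

theorem ZMod.exists_intCast_eq_iff (n : ℕ) (x : ZMod (2 * n + 1)) :
    (∃ t : ℤ, |t| < n ∧ (t : ZMod (2 * n + 1)) = x) ↔
      x ≠ ((n + 1 : ℕ) : ZMod (2 * n + 1)) ∧ x ≠ n := by
  constructor
  · rintro ⟨t, ht, rfl⟩
    rw [abs_lt] at ht
    constructor <;> intro h <;>
    · rw [← Int.cast_natCast, ZMod.intCast_eq_intCast_iff_dvd_sub] at h
      have := Int.eq_zero_of_abs_lt_dvd h (by rw [abs_lt]; push_cast; omega)
      omega
  · rintro ⟨hx_succ, hx⟩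
    have hle : x.valMinAbs.natAbs ≤ n := by
      simpa [Nat.mul_add_div] using x.natAbs_valMinAbs_le
    refine ⟨x.valMinAbs, ?_, x.coe_valMinAbs⟩
    rw [Int.abs_eq_natAbs, Nat.cast_lt]
    refine lt_of_le_of_ne hle fun hn => ?_
    rcases Int.natAbs_eq_iff.mp hn with h | h
    · exact hx (by rw [← x.coe_valMinAbs, h, Int.cast_natCast])
    · have hzero : ((2 * n + 1 : ℕ) : ZMod (2 * n + 1)) = 0 := ZMod.natCast_self _
      push_cast at hzero
      exact hx_succ (by rw [← x.coe_valMinAbs, h]; push_cast; linear_combination -hzero)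

def balancedWeights (m : ℕ) : Multiset ℤ :=
  replicate m 1 + replicate m (-1) + {0}

theorem card_balancedWeights (m : ℕ) : card (balancedWeights m) = 2 * m + 1 := by
  simp only [balancedWeights, card_add, card_replicate, card_singleton]
  ring

theorem sub_mem_wsums_balancedWeights {G : Type*} [AddCommGroup G] (m : ℕ) (S : Multiset G)
    (la lb : List G) (hla : la.length = m) (hlb : lb.length = m)
    (hS : ((la ++ lb ++ [0] : List G) : Multiset G) ≤ S) :
    la.sum - lb.sum ∈ wsums G (2 * m + 1) (balancedWeights m) S := by
  refine ⟨List.replicate m 1 ++ List.replicate m (-1) ++ [0], la ++ lb ++ [0],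
    by simp; ring, by simp [hla, hlb]; ring, ?_, hS, ?_⟩
  · simp only [balancedWeights, ← coe_replicate, ← coe_add, coe_singleton]
    rfl
  rw [List.zip_append (by simp [hla, hlb]), List.zip_append (by simp [hla]), List.map_append,
    List.map_append, List.sum_append, List.sum_append, sum_zip_replicate_zsmul 1 la hla,
    sum_zip_replicate_zsmul (-1) lb hlb]
  simp [sub_eq_add_neg]

theorem intCast_mem_wsums_balancedWeights {R : Type*} [Ring R] [DecidableEq R] (m : ℕ)
    (S : Multiset R) (hS : ∀ a : R, a = 0 ∨ a = 1 ∨ a = 2 → 2 * m + 1 ≤ count a S)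
    {t : ℤ} (ht : |t| ≤ 2 * m) :
    (t : R) ∈ wsums R (2 * m + 1) (balancedWeights m) S := by
  rw [abs_le] at ht
  obtain ⟨la, hla, hla012, hla_sum⟩ :=
    exists_list_sum_eq_of_le_two_mul (R := R) m t.toNat (by omega)
  obtain ⟨lb, hlb, hlb012, hlb_sum⟩ :=
    exists_list_sum_eq_of_le_two_mul (R := R) m (-t).toNat (by omega)
  have hS' : ((la ++ lb ++ [0] : List R) : Multiset R) ≤ S := by
    refine le_of_card_le_of_forall_le_count (by simp [hla, hlb]; omega) fun a ha => hS a ?_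
    simp only [mem_coe, List.mem_append, List.mem_singleton] at ha
    rcases ha with (ha | ha) | rfl
    exacts [hla012 a ha, hlb012 a ha, Or.inl rfl]
  have h := sub_mem_wsums_balancedWeights m S la lb hla hlb hS'
  rwa [hla_sum, hlb_sum, ← Int.cast_natCast t.toNat, ← Int.cast_natCast (-t).toNat,
    ← Int.cast_sub, Int.toNat_sub_toNat_neg] at h

theorem exists_intCast_eq_of_mem_wsums_balancedWeights {N : ℕ} [NeZero N] (m : ℕ)
    (S : Multiset (ZMod N)) (hS : ∀ x ∈ S, x.val ≤ 2) {x : ZMod N}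
    (hx : x ∈ wsums (ZMod N) (2 * m + 1) (balancedWeights m) S) :
    ∃ t : ℤ, |t| ≤ 2 * m ∧ (t : ZMod N) = x := by
  obtain ⟨w, s, hwlen, -, hwW, hsS, rfl⟩ := hx
  have hw : (w : Multiset ℤ) = balancedWeights m :=
    eq_of_le_of_card_le hwW (by simp [card_balancedWeights, hwlen])
  have hsum_max (g : ℤ → ℤ) : (w.map g).sum = ((balancedWeights m).map g).sum := by
    rw [← hw, map_coe, sum_coe]
  have hpos : (w.map fun a => max a 0).sum = m := by simp [hsum_max, balancedWeights]
  have hneg : (w.map fun a => max (-a) 0).sum = m := by simp [hsum_max, balancedWeights]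
  obtain ⟨hlo, hhi⟩ :=
    sum_zip_mul_mem_Icc (fun y : ZMod N => (y.val : ℤ)) (B := 2) (by norm_num) w s
      fun y hy => ⟨by positivity, by exact_mod_cast hS y (mem_of_le hsS (mem_coe.mpr hy))⟩
  rw [hpos] at hhi
  rw [hneg] at hlo
  exact ⟨_, abs_le.mpr ⟨by linarith, hhi⟩, (ZMod.sum_zip_zsmul_eq_intCast w s).symm⟩

theorem stmt5 (p : ℕ) (hp : p.Prime) (hp4 : p % 4 = 3)
    (n : ℕ) (hn : n = (p - 1) / 2)
    (W : Multiset ℤ)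
    (hW : W = Multiset.replicate ((n - 1) / 2) 1 +
        Multiset.replicate ((n - 1) / 2) (-1) + {0})
    (S : Multiset (ZMod p))
    (hS : S = Multiset.replicate n (0 : ZMod p) + Multiset.replicate n 1 +
        Multiset.replicate n 2) :
    wsums (ZMod p) (Multiset.card W) W S =
      {x : ZMod p | x ≠ (((p + 1) / 2 : ℕ) : ZMod p) ∧
        x ≠ (((p - 1) / 2 : ℕ) : ZMod p)} ∧
    ∀ K : AddSubgroup (ZMod p),
      (K : Set (ZMod p)) ⊆ wsums (ZMod p) (Multiset.card W) W S → K = ⊥ := by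
  obtain ⟨m, rfl⟩ : ∃ m, n = 2 * m + 1 := ⟨(n - 1) / 2, by omega⟩
  obtain rfl : p = 2 * (2 * m + 1) + 1 := by omega
  obtain rfl : W = balancedWeights m := by rw [hW, balancedWeights]; congr <;> omega
  rw [show (2 * (2 * m + 1) + 1 + 1) / 2 = 2 * m + 1 + 1 by omega,
    show (2 * (2 * m + 1) + 1 - 1) / 2 = 2 * m + 1 by omega]
  have hsums :
      wsums (ZMod (2 * (2 * m + 1) + 1)) (card (balancedWeights m)) (balancedWeights m) S =
        {x | x ≠ ((2 * m + 1 + 1 : ℕ) : ZMod _) ∧ x ≠ ((2 * m + 1 : ℕ) : ZMod _)} := by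
    ext x
    rw [card_balancedWeights, Set.mem_ofPred_eq, ← ZMod.exists_intCast_eq_iff]
    constructor
    · intro hx
      obtain ⟨t, ht, rfl⟩ := exists_intCast_eq_of_mem_wsums_balancedWeights m S
        (fun _ hx => ZMod.val_le_two_of_mem_replicate_zero_one_two (hS ▸ hx)) hx
      exact ⟨t, by push_cast; linarith, rfl⟩
    · rintro ⟨t, ht, rfl⟩
      exact intCast_mem_wsums_balancedWeights m S
        (fun _ ha => hS ▸ le_count_replicate_zero_one_two _ ha) (by push_cast at ht; omega)
  have : Fact (Nat.card (ZMod _)).Prime := ⟨by rwa [Nat.card_zmod]⟩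
  refine ⟨hsums, fun K hK => K.eq_bot_or_eq_top_of_prime_card.resolve_right fun hK_top => ?_⟩
  have hn_mem := hK (hK_top ▸ AddSubgroup.mem_top ((2 * m + 1 : ℕ) : ZMod _))
  rw [hsums] at hn_mem
  exact hn_mem.2 rfl
end

section
/- Let R be a finite ring of order m whose additive group is G, and let W, S be nontrivial sequences over R with |S| ≥ |W| + D(G) - 1, where D(G) is the Davenport constant of G. If the multiplicity of 0 in S equals the maximum multiplicity h(S) of S and h(S) ≥ D(G) - 1, then Σ(W,S) = Σ_{|W|}(W,S), i.e., every element representable as a weighted subsequence sum of any length 1 ≤ k ≤ min(|W|,|S|) is representable as one of length exactly |W|. -/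
/-!
A weighted sum of length `k < |W|` can always be lengthened by one. If some zero of `S` is
unused, append it, paired with an unused weight. Otherwise all `z = h(S) ≥ D(G) - 1` zeros are
used; dropping the zero-paired terms frees `z` weights. Pair `D(G)` free weights with `D(G)`
unused (necessarily nonzero) elements of `S`: by the definition of `D(G)` some nonempty
subfamily of `r ≤ D(G) ≤ z + 1` of these products sums to zero. Adding it and `z + 1 - r`
weights paired with zeros gives a representation of length exactly `k + 1`.
-/

/-- The Davenport constant of (the additive group of) `G`: the least `d` such
that every sequence over `G` of length at least `d` has a nonempty zero-sum
subsequence. -/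
noncomputable def DavenportConstant (G : Type*) [AddCommMonoid G] : ℕ :=
  sInf { d | ∀ S : Multiset G, d ≤ Multiset.card S →
      ∃ T, T ≤ S ∧ T ≠ 0 ∧ T.sum = 0 }

/-- Weighted `k`-term subsequence sums in a ring: all sums `Σ wᵢ sᵢ` over
`k`-term subsequences of `W` and of `S`, arbitrarily paired. -/
def wsumsR (R : Type*) [Ring R] (k : ℕ) (W S : Multiset R) : Set R :=
  { g | ∃ (w : List R) (s : List R), w.length = k ∧ s.length = k ∧
      (w : Multiset R) ≤ W ∧ (s : Multiset R) ≤ S ∧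
      g = ((w.zip s).map fun p => p.1 * p.2).sum }

namespace Multiset

variable {α β : Type*}

theorem exists_le_map_eq_of_le_map (f : α → β) {s : Multiset α} {t : Multiset β}
    (h : t ≤ s.map f) : ∃ u ≤ s, u.map f = t := by
  classical
  induction s using Multiset.induction_on generalizing t with
  | empty => exact ⟨0, le_rfl, (by simpa using h : t = 0).symm⟩
  | cons a s ih =>
    rw [map_cons] at h
    by_cases ha : f a ∈ t
    · obtain ⟨u, hus, hut⟩ := ih (erase_le_iff_le_cons.mpr h)
      exact ⟨a ::ₘ u, cons_le_cons a hus, by rw [map_cons, hut, cons_erase ha]⟩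
    · obtain ⟨u, hus, hut⟩ := ih ((le_cons_of_notMem ha).mp h)
      exact ⟨u, hus.trans (le_cons_self s a), hut⟩

theorem exists_le_card_eq {s : Multiset α} {n : ℕ} (h : n ≤ card s) :
    ∃ t ≤ s, card t = n := by
  obtain ⟨t, ht⟩ := card_pos_iff_exists_mem.mp
    (by rw [card_powersetCard]; exact Nat.choose_pos h : 0 < card (powersetCard n s))
  exact ⟨t, (mem_powersetCard.mp ht).1, (mem_powersetCard.mp ht).2⟩

theorem exists_pairs_of_le_card {A : Multiset α} {B : Multiset β} {n : ℕ}
    (hA : n ≤ card A) (hB : n ≤ card B) :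
    ∃ P : Multiset (α × β), card P = n ∧ P.map Prod.fst ≤ A ∧ P.map Prod.snd ≤ B := by
  classical
  induction n generalizing A B with
  | zero => exact ⟨0, by simp⟩
  | succ n ih =>
    obtain ⟨a, ha⟩ := card_pos_iff_exists_mem.mp (by omega : 0 < card A)
    obtain ⟨b, hb⟩ := card_pos_iff_exists_mem.mp (by omega : 0 < card B)
    obtain ⟨P, hP, hPA, hPB⟩ := ih (A := A.erase a) (B := B.erase b)
      (by rw [card_erase_of_mem ha, Nat.pred_eq_sub_one]; omega)
      (by rw [card_erase_of_mem hb, Nat.pred_eq_sub_one]; omega)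
    refine ⟨(a, b) ::ₘ P, by simp [hP], ?_, ?_⟩
    · simpa [cons_erase ha] using cons_le_cons a hPA
    · simpa [cons_erase hb] using cons_le_cons b hPB

end Multiset

section Davenport

variable {G : Type*} [AddCommGroup G] [Fintype G]

theorem exists_zero_sum_le_of_card_le (s : Multiset G) (h : Fintype.card G ≤ Multiset.card s) :
    ∃ t ≤ s, t ≠ 0 ∧ t.sum = 0 := by
  set l := s.toList
  -- pigeonhole on the `card s + 1` prefix sums of `s`
  obtain ⟨i, j, hne, heq⟩ := Fintype.exists_ne_map_eq_of_card_lt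
    (fun i : Fin (l.length + 1) => (l.take i).sum) (by simpa [l] using Nat.lt_succ_of_le h)
  wlog hij : i < j generalizing i j
  · exact this j i hne.symm heq.symm (lt_of_le_of_ne (not_lt.mp hij) hne.symm)
  refine ⟨((l.take j).drop i : List G), ?_, ?_, ?_⟩
  · rw [← Multiset.coe_toList s, Multiset.coe_le]
    exact ((List.drop_sublist _ _).trans (List.take_sublist _ _)).subperm
  · have hj := j.is_lt
    simp only [ne_eq, Multiset.coe_eq_zero, ← List.length_eq_zero_iff, List.length_drop,
      List.length_take]
    omega
  · have hsplit := List.sum_take_add_sum_drop (l.take j) i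
    rw [List.take_take, Nat.min_eq_left hij.le, heq] at hsplit
    rw [Multiset.sum_coe]
    exact add_eq_left.mp hsplit

theorem exists_zero_sum_le_of_davenportConstant_le {α : Type*} (f : α → G) (s : Multiset α)
    (h : DavenportConstant G ≤ Multiset.card s) :
    ∃ t ≤ s, t ≠ 0 ∧ (t.map f).sum = 0 := by
  have hD : DavenportConstant G ∈ _ :=
    Nat.sInf_mem ⟨_, exists_zero_sum_le_of_card_le (G := G)⟩
  obtain ⟨t, hts, ht0, hsum⟩ := hD (s.map f) (by rwa [Multiset.card_map])
  obtain ⟨u, hus, rfl⟩ := Multiset.exists_le_map_eq_of_le_map f hts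
  exact ⟨u, hus, by rintro rfl; simp at ht0, hsum⟩

theorem one_le_davenportConstant : 1 ≤ DavenportConstant G := by
  by_contra! h
  obtain ⟨t, ht, ht0, -⟩ := exists_zero_sum_le_of_davenportConstant_le id (0 : Multiset G)
    (by simp; omega)
  exact ht0 (Multiset.le_zero.mp ht)

end Davenport

theorem exists_zero_sum_pairs {R : Type*} [Ring R] [Fintype R] {A B : Multiset R}
    (hA : DavenportConstant R ≤ Multiset.card A) (hB : DavenportConstant R ≤ Multiset.card B) :
    ∃ T : Multiset (R × R), T ≠ 0 ∧ Multiset.card T ≤ DavenportConstant R ∧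
      T.map Prod.fst ≤ A ∧ T.map Prod.snd ≤ B ∧ (T.map fun p => p.1 * p.2).sum = 0 := by
  obtain ⟨P, hP, hPA, hPB⟩ := Multiset.exists_pairs_of_le_card hA hB
  obtain ⟨T, hTP, hT0, hTsum⟩ :=
    exists_zero_sum_le_of_davenportConstant_le (fun p : R × R => p.1 * p.2) P hP.ge
  exact ⟨T, hT0, hP ▸ Multiset.card_le_card hTP,
    (Multiset.map_le_map hTP).trans hPA, (Multiset.map_le_map hTP).trans hPB, hTsum⟩

section WeightedSums

variable {R : Type*} [Ring R] {W S : Multiset R} {k : ℕ} {g : R}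

theorem mem_wsumsR_iff : g ∈ wsumsR R k W S ↔ ∃ P : Multiset (R × R), Multiset.card P = k ∧
    P.map Prod.fst ≤ W ∧ P.map Prod.snd ≤ S ∧ (P.map fun p => p.1 * p.2).sum = g := by
  constructor
  · rintro ⟨w, s, hw, hs, hwW, hsS, rfl⟩
    refine ⟨(w.zip s : List (R × R)), by simp [hw, hs], ?_, ?_, by simp⟩
    · rwa [Multiset.map_coe, List.map_fst_zip (by omega)]
    · rwa [Multiset.map_coe, List.map_snd_zip (by omega)]
  · rintro ⟨P, rfl, hPW, hPS, rfl⟩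
    refine ⟨P.toList.map Prod.fst, P.toList.map Prod.snd, by simp, by simp, ?_, ?_, ?_⟩
    · rwa [← Multiset.map_coe, Multiset.coe_toList]
    · rwa [← Multiset.map_coe, Multiset.coe_toList]
    · rw [List.zip_map', ← Multiset.sum_coe, ← Multiset.map_coe]
      simp

theorem sum_mem_wsumsR_of_add_zero_pairs {P : Multiset (R × R)} {U : Multiset R}
    (hW : P.map Prod.fst + U ≤ W)
    (hS : P.map Prod.snd + Multiset.replicate (Multiset.card U) 0 ≤ S) :
    (P.map fun p => p.1 * p.2).sum ∈ wsumsR R (Multiset.card P + Multiset.card U) W S :=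
  mem_wsumsR_iff.mpr ⟨P + U.map (·, 0), by simp, by simpa [Multiset.map_map] using hW,
    by simpa [Multiset.map_map, Multiset.map_const'] using hS, by simp [Multiset.map_map]⟩

end WeightedSums

theorem exists_le_map_snd_eq_add_replicate_zero {R : Type*} [Ring R] [DecidableEq R]
    (P : Multiset (R × R)) : ∃ Q ≤ P, P.map Prod.snd =
      Q.map Prod.snd + Multiset.replicate ((P.map Prod.snd).count 0) 0 ∧
      (Q.map fun p => p.1 * p.2).sum = (P.map fun p => p.1 * p.2).sum := by
  set Z := P.filter (·.2 = 0)
  set Q := P.filter (¬ ·.2 = 0)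
  have hP : Z + Q = P := Multiset.filter_add_not _ P
  have hZ : Z.map Prod.snd = Multiset.replicate (Multiset.card Z) 0 := by
    rw [← Multiset.card_map Prod.snd, Multiset.eq_replicate_card]
    simp [Z]
  have hQ : 0 ∉ Q.map Prod.snd := by simp [Q]
  have hcount : (P.map Prod.snd).count 0 = Multiset.card Z := by
    rw [← hP, Multiset.map_add, Multiset.count_add, hZ, Multiset.count_replicate_self,
      Multiset.count_eq_zero_of_notMem hQ, add_zero]
  refine ⟨Q, Multiset.filter_le _ P, ?_, ?_⟩
  · rw [hcount, ← hZ, ← Multiset.map_add, add_comm, hP]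
  · rw [← hP, Multiset.map_add, Multiset.sum_add, right_eq_add]
    exact Multiset.sum_eq_zero (by simp [Z])

section Lengthening

variable {R : Type*} [Ring R] [Fintype R] [DecidableEq R] {W S : Multiset R} {k : ℕ}

theorem sum_mem_wsumsR_succ_of_count_zero_eq {P : Multiset (R × R)}
    (hlen : Multiset.card W + DavenportConstant R - 1 ≤ Multiset.card S)
    (hbig : DavenportConstant R - 1 ≤ S.count 0) (hk : Multiset.card P < Multiset.card W)
    (hPW : P.map Prod.fst ≤ W) (hPS : P.map Prod.snd ≤ S)
    (hzero : (P.map Prod.snd).count 0 = S.count 0) :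
    (P.map fun p => p.1 * p.2).sum ∈ wsumsR R (Multiset.card P + 1) W S := by
  obtain ⟨Q, hQP, hsplit, hQsum⟩ := exists_le_map_snd_eq_add_replicate_zero P
  have hD := one_le_davenportConstant (G := R)
  rw [hzero] at hsplit
  set z := S.count 0
  have hQW : Q.map Prod.fst ≤ W := (Multiset.map_le_map hQP).trans hPW
  have hcard : Multiset.card Q + z = Multiset.card P := by
    simpa using (congrArg Multiset.card hsplit).symm
  -- `T` takes its weights outside `Q` but its second entries outside all of `P`, so the `z`
  -- zeros of `S` used by `P` stay available for padding
  obtain ⟨T, hT0, hTD, hTW, hTS, hTsum⟩ := exists_zero_sum_pairs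
    (A := W - Q.map Prod.fst) (B := S - P.map Prod.snd)
    (by rw [Multiset.card_sub hQW, Multiset.card_map]; omega)
    (by rw [Multiset.card_sub hPS, Multiset.card_map]; omega)
  have hT1 : 1 ≤ Multiset.card T := Multiset.card_pos.mpr hT0
  obtain ⟨U, hU, hUcard⟩ := Multiset.exists_le_card_eq
    (s := W - Q.map Prod.fst - T.map Prod.fst) (n := z + 1 - Multiset.card T)
    (by rw [Multiset.card_sub hTW, Multiset.card_sub hQW, Multiset.card_map, Multiset.card_map]
        omega)
  have hW : (Q + T).map Prod.fst + U ≤ W := by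
    rw [Multiset.map_add, add_assoc]
    exact (le_tsub_iff_left hQW).mp ((le_tsub_iff_left hTW).mp hU)
  have hS : (Q + T).map Prod.snd + Multiset.replicate (Multiset.card U) 0 ≤ S :=
    calc (Q + T).map Prod.snd + Multiset.replicate (Multiset.card U) 0
        ≤ Q.map Prod.snd + T.map Prod.snd + Multiset.replicate z 0 := by
          rw [Multiset.map_add]
          exact add_le_add_right ((Multiset.replicate_le_replicate 0).mpr (by omega)) _
      _ = P.map Prod.snd + T.map Prod.snd := by rw [hsplit, add_right_comm]
      _ ≤ S := (le_tsub_iff_left hPS).mp hTS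
  have hmem := sum_mem_wsumsR_of_add_zero_pairs hW hS
  rwa [Multiset.map_add, Multiset.sum_add, hTsum, add_zero, hQsum, Multiset.card_add,
    hUcard, show Multiset.card Q + Multiset.card T + (z + 1 - Multiset.card T) =
      Multiset.card P + 1 by omega] at hmem

theorem mem_wsumsR_succ_of_lt (hlen : Multiset.card W + DavenportConstant R - 1 ≤ Multiset.card S)
    (hbig : DavenportConstant R - 1 ≤ S.count 0) (hk : k < Multiset.card W) {g : R}
    (hg : g ∈ wsumsR R k W S) : g ∈ wsumsR R (k + 1) W S := by
  obtain ⟨P, rfl, hPW, hPS, rfl⟩ := mem_wsumsR_iff.mp hg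
  rcases (Multiset.count_le_of_le 0 hPS).lt_or_eq with hlt | heq
  · obtain ⟨v, hv⟩ : ∃ v, v ∈ W - P.map Prod.fst := by
      rw [← Multiset.card_pos_iff_exists_mem, Multiset.card_sub hPW, Multiset.card_map]
      omega
    have h0 : (0 : R) ∈ S - P.map Prod.snd := by
      rw [← Multiset.count_pos, Multiset.count_sub]
      omega
    exact sum_mem_wsumsR_of_add_zero_pairs (U := {v})
      ((le_tsub_iff_left hPW).mp (Multiset.singleton_le.mpr hv))
      ((le_tsub_iff_left hPS).mp (Multiset.singleton_le.mpr h0))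
  · exact sum_mem_wsumsR_succ_of_count_zero_eq hlen hbig hk hPW hPS heq

theorem mem_wsumsR_card_of_le (hlen : Multiset.card W + DavenportConstant R - 1 ≤ Multiset.card S)
    (hbig : DavenportConstant R - 1 ≤ S.count 0) (hk : k ≤ Multiset.card W) {g : R}
    (hg : g ∈ wsumsR R k W S) : g ∈ wsumsR R (Multiset.card W) W S := by
  suffices ∀ n, k ≤ n → n ≤ Multiset.card W → g ∈ wsumsR R n W S from this _ hk le_rfl
  intro n hkn
  induction n, hkn using Nat.le_induction with
  | base => exact fun _ => hg
  | succ n _ ih => exact fun hn => mem_wsumsR_succ_of_lt hlen hbig hn (ih (by omega))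

end Lengthening

theorem stmt7_general (R : Type*) [Ring R] [Fintype R] [DecidableEq R]
    (W S : Multiset R) (hW : W ≠ 0)
    (hlen : Multiset.card W + DavenportConstant R - 1 ≤ Multiset.card S)
    (hbig : DavenportConstant R - 1 ≤ S.count 0) :
    { g | ∃ k, 1 ≤ k ∧ k ≤ min (Multiset.card W) (Multiset.card S) ∧
        g ∈ wsumsR R k W S } =
      wsumsR R (Multiset.card W) W S := by
  have hD : 1 ≤ DavenportConstant R := one_le_davenportConstant
  ext g
  constructor
  · rintro ⟨k, -, hk, hg⟩
    exact mem_wsumsR_card_of_le hlen hbig (hk.trans (min_le_left _ _)) hg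
  · exact fun hg => ⟨_, Multiset.card_pos.mpr hW, le_min le_rfl (by omega), hg⟩

theorem stmt7 (R : Type*) [Ring R] [Fintype R] [DecidableEq R]
    (W S : Multiset R) (hW : W ≠ 0) (hS : S ≠ 0)
    (hlen : Multiset.card W + DavenportConstant R - 1 ≤ Multiset.card S)
    (hmax : ∀ g : R, S.count g ≤ S.count 0)
    (hbig : DavenportConstant R - 1 ≤ S.count 0) :
    { g | ∃ k, 1 ≤ k ∧ k ≤ min (Multiset.card W) (Multiset.card S) ∧
        g ∈ wsumsR R k W S } =
      wsumsR R (Multiset.card W) W S :=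
  stmt7_general R W S hW hlen hbig
end

section
/- For any sequence S over an abelian group G and integers n with h(S) ≤ n ≤ |S|, the sequence S admits an n-setpartition, i.e., a factorization S = A_1···A_n where each A_i is a nonempty subsequence with all terms distinct. Conversely, if S admits an n-setpartition, then h(S) ≤ n ≤ |S|. -/
/-!
Peel off one block at a time. If `h(S) ≤ n + 1 ≤ |S|`, take as first block a set `B` of distinct
terms of `S` that contains every element of multiplicity `n + 1` and has
`min(#supp S, |S| - n)` elements. This is possible because there are at most `|S| - n` elements
of multiplicity `n + 1`: together they account for `n + 1` times their number of terms. Then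
`h(S - B) ≤ n ≤ |S - B|`, and induction on `n` finishes. Conversely each of the `n` blocks
contributes at least one term to `S` and at most one copy of each element.
-/

open Finset

namespace Multiset

variable {α : Type*} [DecidableEq α]

lemma card_filter_count_eq_mul_le (S : Multiset α) (k : ℕ) :
    #(S.toFinset.filter fun g => S.count g = k) * k ≤ card S :=
  calc #(S.toFinset.filter fun g => S.count g = k) * k
      = ∑ g ∈ S.toFinset.filter (fun g => S.count g = k), S.count g :=
        (Finset.sum_const_nat fun _ hg => (Finset.mem_filter.mp hg).2).symm
    _ ≤ ∑ g ∈ S.toFinset, S.count g := Finset.sum_le_sum_of_subset (Finset.filter_subset _ _)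
    _ = card S := toFinset_sum_count_eq S

lemma exists_nodup_le_count_sub_le {S : Multiset α} {n : ℕ} (hcount : ∀ g, S.count g ≤ n + 1)
    (hcard : n + 1 ≤ card S) :
    ∃ B ≤ S, B ≠ 0 ∧ B.Nodup ∧ (∀ g, (S - B).count g ≤ n) ∧ n ≤ card (S - B) := by
  set F₀ := S.toFinset.filter fun g => S.count g = n + 1
  have hF₀ : #F₀ ≤ card S - n := by
    have hmul : #F₀ * (n + 1) ≤ card S := card_filter_count_eq_mul_le S (n + 1)
    rcases Nat.eq_zero_or_pos #F₀ with h | h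
    · omega
    · have : #F₀ + n ≤ card S := by nlinarith
      omega
  have hsupp : 1 ≤ #S.toFinset := by
    rw [Nat.one_le_iff_ne_zero, Ne, Finset.card_eq_zero, toFinset_eq_empty, ← card_eq_zero]
    omega
  obtain ⟨F, hF₀F, hFS, hFcard⟩ :=
    Finset.exists_subsuperset_card_eq (Finset.filter_subset _ S.toFinset)
      (le_min (Finset.card_le_card (Finset.filter_subset _ _)) hF₀)
      (min_le_left #S.toFinset (card S - n))
  have hFS' : F.val ≤ S := (le_iff_subset F.nodup).mpr fun g hg => mem_toFinset.mp (hFS hg)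
  refine ⟨F.val, hFS', ?_, F.nodup, fun g => ?_, ?_⟩
  · rw [Ne, ← card_eq_zero, card_val, hFcard]
    omega
  · rw [count_sub, count_eq_of_nodup F.nodup]
    have := hcount g
    split_ifs with hg
    · omega
    · have : S.count g ≠ n + 1 := fun h =>
        hg (hF₀F (Finset.mem_filter.mpr ⟨mem_toFinset.mpr (count_pos.mp (by omega)), h⟩))
      omega
  · rw [card_sub hFS', card_val, hFcard]
    omega

lemma exists_setPartition {S : Multiset α} {n : ℕ} (hcount : ∀ g, S.count g ≤ n)
    (hcard : n ≤ card S) :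
    ∃ A : List (Multiset α), A.length = n ∧
      (∀ a ∈ A, a ≠ 0 ∧ a.Nodup) ∧ A.sum = S := by
  induction n generalizing S with
  | zero =>
    refine ⟨[], rfl, by simp, ?_⟩
    rw [List.sum_nil, eq_comm, eq_zero_iff_forall_notMem]
    exact fun g hg => (count_pos.mpr hg).ne' (Nat.le_zero.mp (hcount g))
  | succ n ih =>
    obtain ⟨B, hBS, hB0, hBnodup, hcount', hcard'⟩ := exists_nodup_le_count_sub_le hcount hcard
    obtain ⟨A, hlen, hA, hsum⟩ := ih hcount' hcard'
    refine ⟨B :: A, by rw [List.length_cons, hlen], ?_, ?_⟩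
    · rintro a (_ | ⟨_, ha⟩)
      exacts [⟨hB0, hBnodup⟩, hA a ha]
    · rw [List.sum_cons, hsum, add_tsub_cancel_of_le hBS]

lemma count_sum_le_length {A : List (Multiset α)} (hA : ∀ a ∈ A, a.Nodup) (g : α) :
    A.sum.count g ≤ A.length := by
  induction A with
  | nil => simp
  | cons a A ih =>
    rw [List.sum_cons, count_add, List.length_cons]
    have := nodup_iff_count_le_one.mp (hA a List.mem_cons_self) g
    have := ih fun b hb => hA b (List.mem_cons_of_mem a hb)
    omega

end Multiset

lemma List.length_le_card_sum {α : Type*} {A : List (Multiset α)} (hA : ∀ a ∈ A, a ≠ 0) :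
    A.length ≤ Multiset.card A.sum := by
  induction A with
  | nil => simp
  | cons a A ih =>
    rw [List.sum_cons, Multiset.card_add, List.length_cons]
    have := Multiset.card_pos.mpr (hA a List.mem_cons_self)
    have := ih fun b hb => hA b (List.mem_cons_of_mem a hb)
    omega

theorem stmt10_general (G : Type*) [DecidableEq G]
    (S : Multiset G) (n : ℕ) :
    ((∀ g : G, S.count g ≤ n) ∧ n ≤ Multiset.card S) ↔
      ∃ A : List (Multiset G), A.length = n ∧
        (∀ a ∈ A, a ≠ 0 ∧ a.Nodup) ∧ A.sum = S := by
  constructor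
  · rintro ⟨hcount, hcard⟩
    exact Multiset.exists_setPartition hcount hcard
  · rintro ⟨A, rfl, hA, rfl⟩
    exact ⟨Multiset.count_sum_le_length fun a ha => (hA a ha).2,
      List.length_le_card_sum fun a ha => (hA a ha).1⟩

theorem stmt10 (G : Type*) [AddCommGroup G] [DecidableEq G]
    (S : Multiset G) (n : ℕ) :
    ((∀ g : G, S.count g ≤ n) ∧ n ≤ Multiset.card S) ↔
      ∃ A : List (Multiset G), A.length = n ∧
        (∀ a ∈ A, a ≠ 0 ∧ a.Nodup) ∧ A.sum = S :=
  stmt10_general G S n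
end
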